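/- arXiv:1909.07715 — 3 statements merged into one kernel-verified Lean document; each statement's English description precedes it below -/
import Mathlib

section
/- Contraction property of the averaging operator: let f be L-Lipschitz and suppose κ_ε(x,y) ≥ εK for all distinct x, y ∈ V, where K > 0. Then the ε-averaging operator 𝒜^ε f(x) := Σ_z f(z)ν^ε_x(z) is (1−εK)L-Lipschitz. -/
open Finset Filter Topology MeasureTheory
open scoped Classical

noncomputable section

variable {V : Type*}

/-- Vertex weight `μ(x) = Σ_y μ_{xy}`. -/
def vdeg [Fintype V] (μ : V → V → ℝ) (x : V) : ℝ := ∑ y, μ x y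

/-- Transition probability kernel `P(x,y) = μ_{xy}/μ(x)`. -/
def transP [Fintype V] (μ : V → V → ℝ) (x y : V) : ℝ := μ x y / vdeg μ x

/-- `m` is the Perron measure of `(V,μ)`. -/
def IsPerron [Fintype V] (μ : V → V → ℝ) (m : V → ℝ) : Prop :=
  (∀ x, 0 < m x) ∧ (∑ x, m x = 1) ∧ ∀ x, m x = ∑ y, m y * transP μ y x

/-- Mean transition probability kernel `𝒫 = (P + ←P)/2`. -/
def meanK [Fintype V] (μ : V → V → ℝ) (m : V → ℝ) (x y : V) : ℝ :=
  (transP μ x y + m y / m x * transP μ y x) / 2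

/-- There is a directed path of length `n` from `x` to `y`. -/
def HasPathLen (μ : V → V → ℝ) (x y : V) (n : ℕ) : Prop :=
  ∃ c : ℕ → V, c 0 = x ∧ c n = y ∧ ∀ i < n, 0 < μ (c i) (c (i + 1))

/-- The (non-symmetric) graph distance. -/
def gdist (μ : V → V → ℝ) (x y : V) : ℝ :=
  sInf {r : ℝ | ∃ n : ℕ, (r : ℝ) = (n : ℝ) ∧ HasPathLen μ x y n}

/-- The graph is simple: no loops. -/
def IsSimpleW (μ : V → V → ℝ) : Prop := ∀ x, μ x x = 0

/-- The edge weight is nonnegative. -/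
def Nonneg (μ : V → V → ℝ) : Prop := ∀ x y, 0 ≤ μ x y

/-- The graph is strongly connected. -/
def StronglyConnectedW (μ : V → V → ℝ) : Prop := ∀ x y, ∃ n, HasPathLen μ x y n

/-- `π` is a coupling of the probability measures `ν₀, ν₁`. -/
def IsCoupling [Fintype V] (π : V → V → ℝ) (ν₀ ν₁ : V → ℝ) : Prop :=
  (∀ x y, 0 ≤ π x y) ∧ (∀ x, ∑ y, π x y = ν₀ x) ∧ (∀ y, ∑ x, π x y = ν₁ y)

/-- The L¹-Wasserstein distance with cost `d`. -/
def Wass [Fintype V] (d : V → V → ℝ) (ν₀ ν₁ : V → ℝ) : ℝ :=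
  sInf {c : ℝ | ∃ π, IsCoupling π ν₀ ν₁ ∧ c = ∑ x, ∑ y, d x y * π x y}

/-- The probability measure `ν^ε_x`. -/
def nu [Fintype V] (P : V → V → ℝ) (ε : ℝ) (x z : V) : ℝ :=
  if z = x then 1 - ε else ε * P x z

/-- `κ_ε(x,y) = 1 − W(ν^ε_x, ν^ε_y)/d(x,y)`. -/
def kappaEps [Fintype V] (μ : V → V → ℝ) (m : V → ℝ) (ε : ℝ) (x y : V) : ℝ :=
  1 - Wass (gdist μ) (nu (meanK μ m) ε x) (nu (meanK μ m) ε y) / gdist μ x y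

/-- The (positive) Chung Laplacian associated with a kernel `P`. -/
def chungL [Fintype V] (P : V → V → ℝ) (f : V → ℝ) (x : V) : ℝ :=
  f x - ∑ y, P x y * f y

/-- The negative Laplacian `Δ = −ℒ`. -/
def negL [Fintype V] (P : V → V → ℝ) (f : V → ℝ) (x : V) : ℝ :=
  (∑ y, P x y * f y) - f x

/-- `f` is 1-Lipschitz with respect to the non-symmetric distance `d`. -/
def Lip1 (d : V → V → ℝ) (f : V → ℝ) : Prop := ∀ x y, f y - f x ≤ d x y

/-- The asymptotic mean curvature `ℋ_x = ℒρ_x(x)`. -/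
def Hout [Fintype V] (μ : V → V → ℝ) (m : V → ℝ) (x : V) : ℝ :=
  chungL (meanK μ m) (fun y => gdist μ x y) x

/-- The reverse asymptotic mean curvature `←ℋ_x = ℒ←ρ_x(x)`. -/
def Hin [Fintype V] (μ : V → V → ℝ) (m : V → ℝ) (x : V) : ℝ :=
  chungL (meanK μ m) (fun y => gdist μ y x) x

/-- The mixed asymptotic mean curvature `ℋ(x,y) = −(ℋ_x + ←ℋ_y)`. -/
def Hmix [Fintype V] (μ : V → V → ℝ) (m : V → ℝ) (x y : V) : ℝ :=
  -(Hout μ m x + Hin μ m y)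

/-- The neighborhood `𝒩_x = N_x ∪ ←N_x`. -/
def nbr [Fintype V] (μ : V → V → ℝ) (x : V) : Finset V :=
  Finset.univ.filter (fun y => 0 < μ x y ∨ 0 < μ y x)

lemma gdist_self_aux (μ : V → V → ℝ) (x : V) : gdist μ x x = 0 := by
  unfold gdist
  have hmem : (0 : ℝ) ∈ {r : ℝ | ∃ n : ℕ, (r : ℝ) = (n : ℝ) ∧ HasPathLen μ x x n} :=
    ⟨0, by norm_num, fun _ => x, rfl, rfl, fun i hi => absurd hi (by omega)⟩
  apply le_antisymm
  · exact csInf_le ⟨0, fun r hr => by obtain ⟨n, rfl, -⟩ := hr; positivity⟩ hmem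
  · apply le_csInf ⟨0, hmem⟩
    rintro r ⟨n, rfl, -⟩; positivity

lemma gdist_one_le_aux (μ : V → V → ℝ) (hconn : StronglyConnectedW μ) {x y : V}
    (hxy : x ≠ y) : 1 ≤ gdist μ x y := by
  unfold gdist
  obtain ⟨n, hp⟩ := hconn x y
  apply le_csInf
  · exact ⟨(n : ℝ), n, rfl, hp⟩
  rintro r ⟨n, rfl, c, h0, hn, -⟩
  have : n ≠ 0 := by rintro rfl; exact hxy (h0 ▸ hn ▸ rfl)
  exact_mod_cast Nat.one_le_iff_ne_zero.2 this

/-- contraction property of the `ε`-averaging operator. -/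
theorem averaging_operator_contraction
    {V : Type*} [Fintype V] (μ : V → V → ℝ) (m : V → ℝ)
    (hnn : Nonneg μ) (hsimple : IsSimpleW μ) (hconn : StronglyConnectedW μ)
    (hm : IsPerron μ m) (ε : ℝ) (hε : ε ∈ Set.Ioc (0:ℝ) 1)
    (L K : ℝ) (hL : 0 < L) (hK : 0 < K)
    (f : V → ℝ) (hf : ∀ x y, f y - f x ≤ L * gdist μ x y)
    (hκ : ∀ x y : V, x ≠ y → ε * K ≤ kappaEps μ m ε x y) :
    ∀ x y : V,
      (∑ z, f z * nu (meanK μ m) ε y z) - (∑ z, f z * nu (meanK μ m) ε x z)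
        ≤ (1 - ε * K) * L * gdist μ x y := by
  obtain ⟨hε0, hε1⟩ := hε
  obtain ⟨hmpos, hmsum, hmeq⟩ := hm
  intro x y
  by_cases hxy : x = y
  · subst hxy
    simp [gdist_self_aux μ x]
  -- vertex degrees are positive
  have hvdeg : ∀ a : V, 0 < vdeg μ a := by
    intro a
    have hb : ∃ b : V, b ≠ a := by
      by_cases hax : a = x
      · exact ⟨y, by rw [hax]; exact fun h => hxy h.symm⟩
      · exact ⟨x, fun h => hax h.symm⟩
    obtain ⟨b, hba⟩ := hb
    obtain ⟨n, c, h0, hn, hstep⟩ := hconn a b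
    have hn0 : n ≠ 0 := by rintro rfl; exact hba (hn ▸ h0 ▸ rfl)
    have hpos : 0 < μ a (c 1) := by
      have := hstep 0 (by omega); rwa [h0] at this
    exact Finset.sum_pos' (fun z _ => hnn a z) ⟨c 1, Finset.mem_univ _, hpos⟩
  -- the kernel is nonnegative
  have hPnn : ∀ a b : V, 0 ≤ meanK μ m a b := by
    intro a b
    have h1 : 0 ≤ transP μ a b := div_nonneg (hnn a b) (hvdeg a).le
    have h2 : 0 ≤ transP μ b a := div_nonneg (hnn b a) (hvdeg b).le
    have h3 : 0 ≤ m b / m a := div_nonneg (hmpos b).le (hmpos a).le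
    unfold meanK; positivity
  -- kernel rows sum to 1
  have hPsum : ∀ a : V, ∑ z, meanK μ m a z = 1 := by
    intro a
    unfold meanK
    have h1 : ∑ z, transP μ a z = 1 := by
      unfold transP
      rw [← Finset.sum_div]
      exact div_self (hvdeg a).ne'
    have h2 : ∑ z, m z / m a * transP μ z a = 1 := by
      have : ∀ z, m z / m a * transP μ z a = (m z * transP μ z a) / m a := by
        intro z; ring
      simp_rw [this]
      rw [← Finset.sum_div, ← hmeq a]
      exact div_self (hmpos a).ne'
    rw [← Finset.sum_div, Finset.sum_add_distrib, h1, h2]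
    norm_num
  -- kernel diagonal vanishes
  have hPdiag : ∀ a : V, meanK μ m a a = 0 := by
    intro a
    unfold meanK transP
    rw [hsimple a]
    norm_num
  -- nu is nonneg and sums to 1
  have hnu_nn : ∀ a z : V, 0 ≤ nu (meanK μ m) ε a z := by
    intro a z
    unfold nu
    split_ifs
    · linarith
    · exact mul_nonneg hε0.le (hPnn a z)
  have hnu_sum : ∀ a : V, ∑ z, nu (meanK μ m) ε a z = 1 := by
    intro a
    have heq : ∀ z : V, nu (meanK μ m) ε a z
        = ε * meanK μ m a z + (if z = a then 1 - ε else 0) := by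
      intro z
      unfold nu
      split_ifs with h
      · subst h; rw [hPdiag z]; ring
      · ring
    simp_rw [heq]
    rw [Finset.sum_add_distrib, ← Finset.mul_sum, hPsum a,
      Finset.sum_ite_eq' Finset.univ a (fun _ => 1 - ε)]
    simp
  set νx := nu (meanK μ m) ε x with hνx
  set νy := nu (meanK μ m) ε y with hνy
  -- the Wasserstein cost set is nonempty
  have hne : ∃ c : ℝ, ∃ π, IsCoupling π νx νy ∧ c = ∑ z, ∑ w, gdist μ z w * π z w := by
    refine ⟨_, fun z w => νx z * νy w, ⟨fun z w => mul_nonneg (hnu_nn x z) (hnu_nn y w),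
      fun z => ?_, fun w => ?_⟩, rfl⟩
    · rw [← Finset.mul_sum, hnu_sum y, mul_one]
    · simp_rw [← Finset.sum_mul]; rw [hnu_sum x, one_mul]
  -- difference is bounded by L times any coupling cost
  have hbound : ∀ c ∈ {c : ℝ | ∃ π, IsCoupling π νx νy ∧
      c = ∑ z, ∑ w, gdist μ z w * π z w},
      (∑ z, f z * νy z) - (∑ z, f z * νx z) ≤ L * c := by
    rintro c ⟨π, ⟨hπ0, hπx, hπy⟩, rfl⟩
    have h1 : ∑ z, f z * νy z = ∑ z, ∑ w, f w * π z w := by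
      rw [Finset.sum_comm]
      refine Finset.sum_congr rfl fun w _ => ?_
      rw [← hπy w, Finset.mul_sum]
    have h2 : ∑ z, f z * νx z = ∑ z, ∑ w, f z * π z w := by
      refine Finset.sum_congr rfl fun z _ => ?_
      rw [← hπx z, Finset.mul_sum]
    rw [h1, h2, ← Finset.sum_sub_distrib]
    simp_rw [← Finset.sum_sub_distrib, ← sub_mul]
    calc ∑ z, ∑ w, (f w - f z) * π z w
        ≤ ∑ z, ∑ w, (L * gdist μ z w) * π z w := by
          refine Finset.sum_le_sum fun z _ => Finset.sum_le_sum fun w _ => ?_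
          exact mul_le_mul_of_nonneg_right (hf z w) (hπ0 z w)
      _ = L * ∑ z, ∑ w, gdist μ z w * π z w := by
          rw [Finset.mul_sum]
          exact Finset.sum_congr rfl fun z _ => by
            rw [Finset.mul_sum]
            exact Finset.sum_congr rfl fun w _ => by ring
  -- difference bounded by L * Wasserstein distance
  have hW : (∑ z, f z * νy z) - (∑ z, f z * νx z) ≤ L * Wass (gdist μ) νx νy := by
    have hlb : ((∑ z, f z * νy z) - (∑ z, f z * νx z)) / L
        ≤ Wass (gdist μ) νx νy := by
      apply le_csInf hne
      intro c hc
      exact (div_le_iff₀ hL).2 (by rw [mul_comm]; exact hbound c hc)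
    have := (div_le_iff₀ hL).1 hlb
    linarith [this]
  -- Wasserstein bound from curvature
  have hd1 : (1 : ℝ) ≤ gdist μ x y := gdist_one_le_aux μ hconn hxy
  have hd0 : 0 < gdist μ x y := lt_of_lt_of_le one_pos hd1
  have hκxy := hκ x y hxy
  unfold kappaEps at hκxy
  have hWle : Wass (gdist μ) νx νy ≤ (1 - ε * K) * gdist μ x y := by
    rw [← hνx, ← hνy] at hκxy
    have : Wass (gdist μ) νx νy / gdist μ x y ≤ 1 - ε * K := by linarith
    calc Wass (gdist μ) νx νy
        = Wass (gdist μ) νx νy / gdist μ x y * gdist μ x y := by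
          field_simp
      _ ≤ (1 - ε * K) * gdist μ x y :=
          mul_le_mul_of_nonneg_right this hd0.le
  calc (∑ z, f z * νy z) - (∑ z, f z * νx z)
      ≤ L * Wass (gdist μ) νx νy := hW
    _ ≤ L * ((1 - ε * K) * gdist μ x y) :=
        mul_le_mul_of_nonneg_left hWle hL.le
    _ = (1 - ε * K) * L * gdist μ x y := by ring
end
end

section
/- Bonnet–Myers type diameter bound: for distinct x, y ∈ V with κ(x,y) > 0, one has d(x,y) ≤ ℋ(x,y)/κ(x,y). Consequently, if inf_{y≠x}κ(x,y) ≥ K > 0 and sup_{y≠x}ℋ(x,y) ≤ Λ for some Λ ≥ 2, then the inscribed radius InRad_x V := sup_y d(x,y) satisfies InRad_x V ≤ Λ/K. -/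
open Finset Filter Topology MeasureTheory
open scoped Classical

noncomputable section

variable {V : Type*}

/-! Pairing `f = d(x, ·)` against `ν^ε_y − ν^ε_x` gives the Kantorovich lower bound
`W(ν^ε_x, ν^ε_y) ≥ d(x,y) − ε ℋ(x,y)`, once the triangle inequality `d(x,y) ≤ d(x,z) + d(z,y)` is
averaged over `z ∼ 𝒫(y, ·)`. Hence `κ_ε(x,y) ≤ ε ℋ(x,y)/d(x,y)`, and dividing by `ε` and letting
`ε → 0` yields `κ(x,y) d(x,y) ≤ ℋ(x,y)`. -/

namespace HasPathLen

variable {μ : V → V → ℝ}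

theorem refl (x : V) : HasPathLen μ x x 0 :=
  ⟨fun _ => x, rfl, rfl, fun _ hi => absurd hi (Nat.not_lt_zero _)⟩

theorem trans {x z y : V} {n₁ n₂ : ℕ} (h₁ : HasPathLen μ x z n₁) (h₂ : HasPathLen μ z y n₂) :
    HasPathLen μ x y (n₁ + n₂) := by
  obtain ⟨c₁, hc₁0, hc₁n, hc₁⟩ := h₁
  obtain ⟨c₂, hc₂0, hc₂n, hc₂⟩ := h₂
  refine ⟨fun i => if i < n₁ then c₁ i else c₂ (i - n₁), ?_, by simp [hc₂n], fun i hi => ?_⟩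
  · rcases Nat.eq_zero_or_pos n₁ with rfl | hn
    · simp [hc₂0, ← hc₁n, hc₁0]
    · simp [hn, hc₁0]
  · dsimp only
    split_ifs with h h' h'
    · exact hc₁ i h
    · rw [show n₁ = i + 1 by omega, Nat.sub_self, hc₂0, ← hc₁n, show n₁ = i + 1 by omega]
      exact hc₁ i h
    · omega
    · rw [show i + 1 - n₁ = i - n₁ + 1 by omega]
      exact hc₂ _ (by omega)

end HasPathLen

section Distance

variable {μ : V → V → ℝ}

theorem gdist_eq_sInf {x y : V} (h : ∃ n, HasPathLen μ x y n) :
    gdist μ x y = (sInf {n : ℕ | HasPathLen μ x y n} : ℕ) := by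
  have hmem : ((sInf {n | HasPathLen μ x y n} : ℕ) : ℝ) ∈
      {r : ℝ | ∃ n : ℕ, r = n ∧ HasPathLen μ x y n} := ⟨_, rfl, Nat.sInf_mem h⟩
  refine le_antisymm (csInf_le ⟨0, ?_⟩ hmem) (le_csInf ⟨_, hmem⟩ ?_)
  · rintro r ⟨n, rfl, -⟩
    exact Nat.cast_nonneg n
  · rintro r ⟨n, rfl, hn⟩
    exact_mod_cast Nat.sInf_le hn

theorem gdist_le_of_hasPathLen {x y : V} {n : ℕ} (h : HasPathLen μ x y n) : gdist μ x y ≤ n := by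
  rw [gdist_eq_sInf ⟨n, h⟩]
  exact_mod_cast Nat.sInf_le h

theorem gdist_self (x : V) : gdist μ x x = 0 :=
  le_antisymm (by simpa using gdist_le_of_hasPathLen (HasPathLen.refl (μ := μ) x))
    (by rw [gdist_eq_sInf ⟨0, HasPathLen.refl x⟩]; positivity)

theorem one_le_gdist (hconn : StronglyConnectedW μ) {x y : V} (hxy : y ≠ x) :
    1 ≤ gdist μ x y := by
  rw [gdist_eq_sInf (hconn x y), Nat.one_le_cast, Nat.one_le_iff_ne_zero]
  intro h0
  obtain ⟨c, hc0, hcn, -⟩ := h0 ▸ Nat.sInf_mem (hconn x y)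
  exact hxy (hcn ▸ hc0)

theorem gdist_triangle (hconn : StronglyConnectedW μ) (x z y : V) :
    gdist μ x y ≤ gdist μ x z + gdist μ z y := by
  rw [gdist_eq_sInf (hconn x z), gdist_eq_sInf (hconn z y), ← Nat.cast_add]
  exact gdist_le_of_hasPathLen
    (HasPathLen.trans (Nat.sInf_mem (hconn x z)) (Nat.sInf_mem (hconn z y)))

end Distance

section Kernel

variable [Fintype V] {μ : V → V → ℝ} {m : V → ℝ}

theorem sum_transP_of_ne_zero {x : V} (hx : vdeg μ x ≠ 0) : ∑ y, transP μ x y = 1 := by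
  simp only [transP, ← Finset.sum_div]
  exact div_self hx

theorem sum_transP_le_one (x : V) : ∑ y, transP μ x y ≤ 1 := by
  rcases eq_or_ne (vdeg μ x) 0 with hx | hx
  · simp [transP, hx]
  · exact (sum_transP_of_ne_zero hx).le

theorem transP_nonneg (hnn : Nonneg μ) (x y : V) : 0 ≤ transP μ x y :=
  div_nonneg (hnn x y) (Finset.sum_nonneg fun y _ => hnn x y)

/-- A vertex of zero weight has a zero row in `P`, through which the invariant mass would leak. -/
theorem vdeg_ne_zero (hm : IsPerron μ m) (x : V) : vdeg μ x ≠ 0 := by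
  obtain ⟨hmpos, hmsum, hmeq⟩ := hm
  intro hx
  have hmass : ∑ z, m z * ∑ y, transP μ z y = 1 := by
    simp_rw [Finset.mul_sum]
    rw [Finset.sum_comm, ← hmsum]
    exact Finset.sum_congr rfl fun y _ => (hmeq y).symm
  have hleak : ∑ z, m z * ∑ y, transP μ z y < ∑ z, m z :=
    Finset.sum_lt_sum (fun z _ => mul_le_of_le_one_right (hmpos z).le (sum_transP_le_one z))
      ⟨x, Finset.mem_univ x, by simpa [transP, hx] using hmpos x⟩
  linarith

theorem meanK_nonneg (hnn : Nonneg μ) (hm : IsPerron μ m) (x y : V) : 0 ≤ meanK μ m x y := by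
  have := div_nonneg (hm.1 y).le (hm.1 x).le
  have := transP_nonneg hnn x y
  have := transP_nonneg hnn y x
  unfold meanK
  positivity

theorem meanK_self (hsimple : IsSimpleW μ) (x : V) : meanK μ m x x = 0 := by
  simp [meanK, transP, hsimple x]

theorem sum_meanK (hm : IsPerron μ m) (x : V) : ∑ y, meanK μ m x y = 1 := by
  have hrev : ∑ y, m y / m x * transP μ y x = 1 := by
    simp_rw [div_mul_eq_mul_div, ← Finset.sum_div, ← hm.2.2 x]
    exact div_self (hm.1 x).ne'
  simp_rw [meanK, ← Finset.sum_div, Finset.sum_add_distrib,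
    sum_transP_of_ne_zero (vdeg_ne_zero hm x), hrev]
  norm_num

end Kernel

section Transport

variable [Fintype V] {P : V → V → ℝ}

theorem nu_nonneg (hP : ∀ x y, 0 ≤ P x y) {ε : ℝ} (hε0 : 0 ≤ ε) (hε1 : ε ≤ 1) (x z : V) :
    0 ≤ nu P ε x z := by
  unfold nu
  split_ifs
  · linarith
  · exact mul_nonneg hε0 (hP x z)

theorem sum_mul_nu {x : V} (hPx : P x x = 0) (f : V → ℝ) (ε : ℝ) :
    ∑ z, f z * nu P ε x z = f x + ε * negL P f x := by
  have hsplit : ∀ z, f z * nu P ε x z = ε * (P x z * f z) + if z = x then (1 - ε) * f x else 0 := by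
    intro z
    unfold nu
    split_ifs with h
    · subst h; simp [hPx, mul_comm]
    · ring
  simp only [hsplit, Finset.sum_add_distrib, ← Finset.mul_sum, Finset.sum_ite_eq', Finset.mem_univ,
    if_true, negL]
  ring

theorem sum_nu {x : V} (hPx : P x x = 0) (hP1 : ∑ z, P x z = 1) (ε : ℝ) : ∑ z, nu P ε x z = 1 := by
  simpa [negL, hP1] using sum_mul_nu hPx (fun _ => 1) ε

theorem isCoupling_mul {ν₀ ν₁ : V → ℝ} (h₀ : ∀ z, 0 ≤ ν₀ z) (h₁ : ∀ z, 0 ≤ ν₁ z)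
    (hs₀ : ∑ z, ν₀ z = 1) (hs₁ : ∑ z, ν₁ z = 1) : IsCoupling (fun a b => ν₀ a * ν₁ b) ν₀ ν₁ :=
  ⟨fun a b => mul_nonneg (h₀ a) (h₁ b), fun a => by rw [← Finset.mul_sum, hs₁, mul_one],
    fun b => by rw [← Finset.sum_mul, hs₀, one_mul]⟩

theorem sum_sub_le_cost_of_isCoupling {d : V → V → ℝ} {f : V → ℝ} (hf : Lip1 d f)
    {π : V → V → ℝ} {ν₀ ν₁ : V → ℝ} (hπ : IsCoupling π ν₀ ν₁) :
    ∑ z, f z * ν₁ z - ∑ z, f z * ν₀ z ≤ ∑ a, ∑ b, d a b * π a b := by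
  obtain ⟨hπ0, hπ₀, hπ₁⟩ := hπ
  calc ∑ z, f z * ν₁ z - ∑ z, f z * ν₀ z = ∑ a, ∑ b, (f b - f a) * π a b := by
        simp_rw [sub_mul, Finset.sum_sub_distrib, ← hπ₀, ← hπ₁, Finset.mul_sum]
        rw [Finset.sum_comm (f := fun b a => f b * π a b)]
    _ ≤ ∑ a, ∑ b, d a b * π a b :=
        Finset.sum_le_sum fun a _ => Finset.sum_le_sum fun b _ =>
          mul_le_mul_of_nonneg_right (hf a b) (hπ0 a b)

theorem sum_sub_le_wass {d : V → V → ℝ} {f : V → ℝ} (hf : Lip1 d f) {ν₀ ν₁ : V → ℝ}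
    (h₀ : ∀ z, 0 ≤ ν₀ z) (h₁ : ∀ z, 0 ≤ ν₁ z) (hs₀ : ∑ z, ν₀ z = 1) (hs₁ : ∑ z, ν₁ z = 1) :
    ∑ z, f z * ν₁ z - ∑ z, f z * ν₀ z ≤ Wass d ν₀ ν₁ := by
  refine le_csInf ⟨_, _, isCoupling_mul h₀ h₁ hs₀ hs₁, rfl⟩ ?_
  rintro c ⟨π, hπ, rfl⟩
  exact sum_sub_le_cost_of_isCoupling hf hπ

end Transport

section Curvature

variable [Fintype V]

theorem le_sum_mul_of_forall_le {P g : V → ℝ} {a : ℝ} (hP : ∀ z, 0 ≤ P z) (hP1 : ∑ z, P z = 1)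
    (h : ∀ z, a ≤ g z) : a ≤ ∑ z, P z * g z :=
  calc a = ∑ z, P z * a := by rw [← Finset.sum_mul, hP1, one_mul]
    _ ≤ ∑ z, P z * g z := Finset.sum_le_sum fun z _ => mul_le_mul_of_nonneg_left (h z) (hP z)

theorem sub_mul_le_wass_nu {P d : V → V → ℝ} (hP : ∀ x y, 0 ≤ P x y) (hP1 : ∀ x, ∑ y, P x y = 1)
    (hP0 : ∀ x, P x x = 0) (hd0 : ∀ x, d x x = 0) (hd : ∀ x z y, d x y ≤ d x z + d z y)
    {ε : ℝ} (hε0 : 0 ≤ ε) (hε1 : ε ≤ 1) (x y : V) :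
    d x y - ε * (∑ z, P x z * d x z + ∑ z, P y z * d z y) ≤ Wass d (nu P ε x) (nu P ε y) := by
  have hLip : Lip1 d (d x) := fun a b => by linarith [hd x a b]
  have hW := sum_sub_le_wass hLip (nu_nonneg hP hε0 hε1 x) (nu_nonneg hP hε0 hε1 y)
    (sum_nu (hP0 x) (hP1 x) ε) (sum_nu (hP0 y) (hP1 y) ε)
  rw [sum_mul_nu (hP0 y), sum_mul_nu (hP0 x)] at hW
  have hdetour : d x y ≤ ∑ z, P y z * (d x z + d z y) :=
    le_sum_mul_of_forall_le (hP y) (hP1 y) (hd x · y)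
  simp only [negL, hd0, mul_add, Finset.sum_add_distrib] at hW hdetour
  linarith [mul_le_mul_of_nonneg_left hdetour hε0]

variable {μ : V → V → ℝ} {m : V → ℝ}

theorem hmix_eq_sum (x y : V) :
    Hmix μ m x y = ∑ z, meanK μ m x z * gdist μ x z + ∑ z, meanK μ m y z * gdist μ z y := by
  simp only [Hmix, Hout, Hin, chungL, gdist_self]
  ring

theorem kappaEps_le_mul_hmix_div (hnn : Nonneg μ) (hsimple : IsSimpleW μ)
    (hconn : StronglyConnectedW μ) (hm : IsPerron μ m) {x y : V} (hxy : y ≠ x) {ε : ℝ}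
    (hε0 : 0 ≤ ε) (hε1 : ε ≤ 1) :
    kappaEps μ m ε x y ≤ ε * Hmix μ m x y / gdist μ x y := by
  have hd : 0 < gdist μ x y := one_pos.trans_le (one_le_gdist hconn hxy)
  have hW := sub_mul_le_wass_nu (meanK_nonneg hnn hm) (sum_meanK hm) (meanK_self hsimple)
    gdist_self (gdist_triangle hconn) hε0 hε1 x y
  rw [← hmix_eq_sum] at hW
  rw [kappaEps, sub_le_comm, le_div_iff₀ hd, sub_mul, one_mul, div_mul_cancel₀ _ hd.ne']
  linarith

theorem mul_gdist_le_hmix_of_tendsto (hnn : Nonneg μ) (hsimple : IsSimpleW μ)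
    (hconn : StronglyConnectedW μ) (hm : IsPerron μ m) {x y : V} (hxy : y ≠ x) {k : ℝ}
    (hk : Tendsto (fun ε => kappaEps μ m ε x y / ε) (𝓝[>] 0) (𝓝 k)) :
    k * gdist μ x y ≤ Hmix μ m x y := by
  have hd : 0 < gdist μ x y := one_pos.trans_le (one_le_gdist hconn hxy)
  rw [← le_div_iff₀ hd]
  refine le_of_tendsto hk ?_
  filter_upwards [Ioo_mem_nhdsGT (zero_lt_one' ℝ)] with ε hε
  rw [div_le_iff₀ hε.1, div_mul_eq_mul_div, mul_comm]
  exact kappaEps_le_mul_hmix_div hnn hsimple hconn hm hxy hε.1.le hε.2.le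

end Curvature

/-- Bonnet–Myers type diameter bound and inscribed radius bound. -/
theorem bonnet_myers
    {V : Type*} [Fintype V] [Nonempty V] (μ : V → V → ℝ) (m : V → ℝ)
    (hnn : Nonneg μ) (hsimple : IsSimpleW μ) (hconn : StronglyConnectedW μ)
    (hm : IsPerron μ m) (x : V) (κ : V → ℝ)
    (hκ : ∀ y : V, y ≠ x →
      Tendsto (fun ε => kappaEps μ m ε x y / ε) (𝓝[>] (0:ℝ)) (𝓝 (κ y)))
    (K Λ : ℝ) (hK : 0 < K) (hΛ : 2 ≤ Λ)
    (hKb : ∀ y : V, y ≠ x → K ≤ κ y)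
    (hΛb : ∀ y : V, y ≠ x → Hmix μ m x y ≤ Λ) :
    (∀ y : V, y ≠ x → 0 < κ y → gdist μ x y ≤ Hmix μ m x y / κ y) ∧
    Finset.univ.sup' Finset.univ_nonempty (fun y => gdist μ x y) ≤ Λ / K := by
  have hdiam : ∀ y, y ≠ x → 0 < κ y → gdist μ x y ≤ Hmix μ m x y / κ y := fun y hy hκy => by
    rw [le_div_iff₀ hκy, mul_comm]
    exact mul_gdist_le_hmix_of_tendsto hnn hsimple hconn hm hy (hκ y hy)
  refine ⟨hdiam, Finset.sup'_le _ _ fun y _ => ?_⟩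
  rcases eq_or_ne y x with rfl | hy
  · rw [gdist_self]
    exact div_nonneg (by linarith) hK.le
  · calc gdist μ x y ≤ Hmix μ m x y / κ y := hdiam y hy (hK.trans_le (hKb y hy))
      _ ≤ Λ / K := div_le_div₀ (by linarith) (hΛb y hy) hK (hKb y hy)
end
end

section
/- Discrete co-area formula: for every f : V → ℝ, ∫_{−∞}^{∞} 𝔪(∂Ω_{f,t}) dt = (1/2)Σ_{y,z∈V}|f(y)−f(z)|𝔪_{yz}, where Ω_{f,t} = {x ∈ V : f(x) > t} and 𝔪(∂Ω) = Σ_{y∈Ω}Σ_{z∈V∖Ω}𝔪_{yz}. -/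
open Finset Filter Topology MeasureTheory
open scoped Classical

noncomputable section

variable {V : Type*}

/- An edge `yz` is cut by the superlevel set `{f > t}` exactly when `f z ≤ t < f y`, so the
boundary measure at level `t` is a sum of indicators of intervals `[f z, f y)`; integrating in `t`
turns each indicator into the positive part `(f y - f z)⁺`, and by symmetry of the weights the
positive parts add up to half the sum of the absolute values. -/

theorem sum_superlevel_cut_eq_sum_indicator_Ico [Fintype V] (w : V → V → ℝ) (f : V → ℝ)
    (t : ℝ) :
    ∑ y ∈ univ.filter (fun v => t < f v), ∑ z ∈ (univ.filter (fun v : V => t < f v))ᶜ, w y z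
      = ∑ y, ∑ z, (Set.Ico (f z) (f y)).indicator (fun _ => w y z) t := by
  simp only [compl_filter, not_lt, sum_filter, Set.indicator_apply, Set.mem_Ico]
  refine sum_congr rfl fun y _ => ?_
  by_cases hy : t < f y <;> simp [hy]

theorem integrable_indicator_Ico_const (a b c : ℝ) :
    Integrable ((Set.Ico a b).indicator fun _ : ℝ => c) :=
  (integrableOn_const measure_Ico_lt_top.ne).integrable_indicator measurableSet_Ico

theorem integral_indicator_Ico_const (a b c : ℝ) :
    ∫ t, (Set.Ico a b).indicator (fun _ => c) t = max (b - a) 0 * c := by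
  rw [integral_indicator_const _ measurableSet_Ico, Real.volume_real_Ico, smul_eq_mul]

theorem sum_max_sub_zero_mul_eq_half_sum_abs_sub_mul [Fintype V] (w : V → V → ℝ)
    (hsymm : ∀ y z, w y z = w z y) (f : V → ℝ) :
    ∑ y, ∑ z, max (f y - f z) 0 * w y z = (1/2) * ∑ y, ∑ z, |f y - f z| * w y z := by
  have hswap : ∑ y, ∑ z, max (f y - f z) 0 * w y z = ∑ y, ∑ z, max (-(f y - f z)) 0 * w y z := by
    rw [sum_comm]
    simp_rw [neg_sub, hsymm]
  have hsplit : ∀ y z, |f y - f z| * w y z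
      = max (f y - f z) 0 * w y z + max (-(f y - f z)) 0 * w y z := fun y z => by
    rw [← add_mul, max_zero_add_max_neg_zero_eq_abs_self]
  simp_rw [hsplit, sum_add_distrib, ← hswap]
  ring

theorem coarea_formula_general
    {V : Type*} [Fintype V] (w : V → V → ℝ)
    (hsymm : ∀ y z, w y z = w z y) (f : V → ℝ) :
    (∫ t : ℝ, ∑ y ∈ Finset.univ.filter (fun v => t < f v),
        ∑ z ∈ (Finset.univ.filter (fun v : V => t < f v))ᶜ, w y z)
      = (1/2) * ∑ y, ∑ z, |f y - f z| * w y z := by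
  have hint : ∀ y z, Integrable ((Set.Ico (f z) (f y)).indicator fun _ => w y z) :=
    fun y z => integrable_indicator_Ico_const _ _ _
  calc _ = ∫ t, ∑ y, ∑ z, (Set.Ico (f z) (f y)).indicator (fun _ => w y z) t := by
        simp_rw [sum_superlevel_cut_eq_sum_indicator_Ico]
    _ = ∑ y, ∑ z, ∫ t, (Set.Ico (f z) (f y)).indicator (fun _ => w y z) t := by
        rw [integral_finsetSum _ fun y _ => integrable_finsetSum _ fun z _ => hint y z]
        exact sum_congr rfl fun y _ => integral_finsetSum _ fun z _ => hint y z
    _ = ∑ y, ∑ z, max (f y - f z) 0 * w y z := by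
        simp_rw [integral_indicator_Ico_const]
    _ = _ := sum_max_sub_zero_mul_eq_half_sum_abs_sub_mul w hsymm f

/-- discrete co-area formula. -/
theorem coarea_formula
    {V : Type*} [Fintype V] (w : V → V → ℝ)
    (hsymm : ∀ y z, w y z = w z y) (hw : ∀ y z, 0 ≤ w y z) (f : V → ℝ) :
    (∫ t : ℝ, ∑ y ∈ Finset.univ.filter (fun v => t < f v),
        ∑ z ∈ (Finset.univ.filter (fun v : V => t < f v))ᶜ, w y z)
      = (1/2) * ∑ y, ∑ z, |f y - f z| * w y z :=
  coarea_formula_general w hsymm f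
end
end
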